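/- For every β > 0 there exists a finite constant K such that for all β̂ ≥ β and all a ∈ ℝ, T^{IG}(a, β̂) ≤ K · Var^{IG}(a, β̂); that is, the supremum over β̂ ≥ β and a ∈ ℝ of the ratio T^{IG}(a,β̂)/Var^{IG}(a,β̂) is finite. -/

import Mathlib

/-!
Write `w n = exp (-β̂ (n - a)² / 2)`, `r = round a` and `s` for the neighbour of `r` on the side
of `a`. Completing the square gives `w n ≤ w r · h (n - r)` for all `n` and `w n ≤ w s · h (n - r)`
for `n ≠ r`, where `h t = exp (-β |t| (|t| - 1) / 2)` is summable against every polynomial and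
depends neither on `β̂ ≥ β` nor on `a`. The first bound keeps the mean within a constant `q` of
`r`; the second bounds the unnormalized third moment by `q · V + w s · C`, with `V` the
unnormalized variance. Finally `V ≥ w s / 2`, since `r ≠ s` are integers and `w s ≤ w r`.
-/
noncomputable section
open Real

/-- Normalization constant of the integer-valued Gaussian with parameters `(a, β)`. -/
def ZIG (a β : ℝ) : ℝ := ∑' n : ℤ, Real.exp (-β * ((n : ℝ) - a) ^ 2 / 2)

/-- Mean of the integer-valued Gaussian with parameters `(a, β)`. -/
def muIG (a β : ℝ) : ℝ :=
  (∑' n : ℤ, (n : ℝ) * Real.exp (-β * ((n : ℝ) - a) ^ 2 / 2)) / ZIG a β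

/-- Variance of the integer-valued Gaussian with parameters `(a, β)`. -/
def VarIG (a β : ℝ) : ℝ :=
  (∑' n : ℤ, ((n : ℝ) - muIG a β) ^ 2 * Real.exp (-β * ((n : ℝ) - a) ^ 2 / 2)) / ZIG a β

/-- Third centred absolute moment of the integer-valued Gaussian with parameters `(a, β)`. -/
def TIG (a β : ℝ) : ℝ :=
  (∑' n : ℤ, |(n : ℝ) - muIG a β| ^ 3 * Real.exp (-β * ((n : ℝ) - a) ^ 2 / 2)) / ZIG a β

def igWeight (β a : ℝ) (n : ℤ) : ℝ := Real.exp (-β * ((n : ℝ) - a) ^ 2 / 2)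

def igDecay (β : ℝ) (t : ℤ) : ℝ := Real.exp (-β * (|(t : ℝ)| * (|(t : ℝ)| - 1)) / 2)

lemma igWeight_pos (β a : ℝ) (n : ℤ) : 0 < igWeight β a n := Real.exp_pos _

lemma igDecay_pos (β : ℝ) (t : ℤ) : 0 < igDecay β t := Real.exp_pos _

lemma summable_abs_pow_mul_igDecay {β : ℝ} (hβ : 0 < β) (k : ℕ) :
    Summable fun t : ℤ => |(t : ℝ)| ^ k * igDecay β t := by
  refine (summable_pow_mul_jacobiTheta₂_term_bound (β / (4 * π)) (T := β / (2 * π))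
    (by positivity) k).congr fun t => ?_
  rw [igDecay, Int.cast_abs, ← sq_abs (t : ℝ)]
  congr 2
  field_simp
  ring

lemma summable_add_pow_mul_igDecay {β : ℝ} (hβ : 0 < β) (q : ℝ) (k : ℕ) :
    Summable fun t : ℤ => (|(t : ℝ)| + q) ^ k * igDecay β t := by
  simp_rw [add_pow, Finset.sum_mul]
  refine summable_sum fun j _ => ?_
  refine ((summable_abs_pow_mul_igDecay hβ j).mul_right (q ^ (k - j) * k.choose j)).congr
    fun t => ?_
  ring

lemma abs_mul_abs_sub_one_le_sub_sq_sub_sq {t α : ℝ} (hα : |α| ≤ 1 / 2) :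
    |t| * (|t| - 1) ≤ (t - α) ^ 2 - α ^ 2 := by
  have : t * α ≤ |t| * |α| := by rw [← abs_mul]; exact le_abs_self _
  nlinarith [sq_abs t, abs_nonneg t]

lemma abs_mul_abs_sub_one_le_sub_sq_sub_sq_of_one_le_abs {t α σ : ℝ} (ht : 1 ≤ |t|)
    (hα : |α| ≤ 1 / 2) (hσ : |σ| = 1) (hσα : 0 ≤ σ * α) :
    |t| * (|t| - 1) ≤ (t - α) ^ 2 - (σ - α) ^ 2 := by
  have htα : t * α ≤ |t| * |α| := by rw [← abs_mul]; exact le_abs_self _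
  have hσα' : σ * α = |α| := by rw [← abs_of_nonneg hσα, abs_mul, hσ, one_mul]
  have hσ2 : σ ^ 2 = 1 := by rw [← sq_abs, hσ, one_pow]
  nlinarith [sq_abs t, abs_nonneg α, mul_nonneg (sub_nonneg.2 ht) (by linarith : 0 ≤ 1 - 2 * |α|)]

lemma abs_mul_abs_sub_one_nonneg (t : ℤ) : 0 ≤ |(t : ℝ)| * (|(t : ℝ)| - 1) := by
  rcases eq_or_ne t 0 with rfl | ht
  · simp
  · have : (1 : ℝ) ≤ |(t : ℝ)| := by exact_mod_cast Int.one_le_abs ht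
    nlinarith

lemma igWeight_le_mul_igDecay {β βh a : ℝ} (hβ : 0 ≤ β) (hβh : β ≤ βh) {n j r : ℤ}
    (h : |((n - r : ℤ) : ℝ)| * (|((n - r : ℤ) : ℝ)| - 1) ≤ ((n : ℝ) - a) ^ 2 - ((j : ℝ) - a) ^ 2) :
    igWeight βh a n ≤ igWeight βh a j * igDecay β (n - r) := by
  rw [igWeight, igWeight, igDecay, ← Real.exp_add, Real.exp_le_exp]
  have h0 := abs_mul_abs_sub_one_nonneg (n - r)
  nlinarith [mul_le_mul_of_nonneg_right hβh h0]

lemma igWeight_le_igWeight_round_mul_igDecay {β βh : ℝ} (hβ : 0 ≤ β) (hβh : β ≤ βh) (a : ℝ)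
    (n : ℤ) :
    igWeight βh a n ≤ igWeight βh a (round a) * igDecay β (n - round a) := by
  refine igWeight_le_mul_igDecay hβ hβh ?_
  have := abs_mul_abs_sub_one_le_sub_sq_sub_sq (t := (n : ℝ) - round a) (abs_sub_round a)
  convert this using 2 <;> push_cast <;> ring

lemma igWeight_le_igWeight_add_mul_igDecay {β βh : ℝ} (hβ : 0 ≤ β) (hβh : β ≤ βh) {a : ℝ} {σ : ℤ}
    (hσ : |σ| = 1) (hσa : 0 ≤ σ * (a - round a)) {n : ℤ} (hn : n ≠ round a) :
    igWeight βh a n ≤ igWeight βh a (round a + σ) * igDecay β (n - round a) := by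
  refine igWeight_le_mul_igDecay hβ hβh ?_
  have hn : (1 : ℝ) ≤ |(n : ℝ) - round a| := by
    exact_mod_cast Int.one_le_abs (sub_ne_zero.2 hn)
  have := abs_mul_abs_sub_one_le_sub_sq_sub_sq_of_one_le_abs hn (abs_sub_round a)
    (by exact_mod_cast hσ) hσa
  convert this using 2 <;> push_cast <;> ring

lemma igWeight_le_one {β : ℝ} (hβ : 0 ≤ β) (a : ℝ) (n : ℤ) : igWeight β a n ≤ 1 :=
  Real.exp_le_one_iff.2 (by nlinarith [sq_nonneg ((n : ℝ) - a)])

lemma igWeight_le_igWeight_round {β : ℝ} (hβ : 0 ≤ β) (a : ℝ) (n : ℤ) :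
    igWeight β a n ≤ igWeight β a (round a) := by
  have h : ((round a : ℝ) - a) ^ 2 ≤ ((n : ℝ) - a) ^ 2 := by
    rw [← sq_abs, ← sq_abs ((n : ℝ) - a), abs_sub_comm, abs_sub_comm (n : ℝ)]
    exact pow_le_pow_left₀ (abs_nonneg _) (round_le a n) 2
  rw [igWeight, igWeight, Real.exp_le_exp]
  nlinarith


lemma summable_add_pow_mul_igDecay_sub {β : ℝ} (hβ : 0 < β) (q : ℝ) (k : ℕ) (r : ℤ) :
    Summable fun n : ℤ => (|((n - r : ℤ) : ℝ)| + q) ^ k * igDecay β (n - r) :=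
  (Equiv.subRight r).summable_iff.2 (summable_add_pow_mul_igDecay hβ q k)

lemma summable_abs_sub_pow_mul_igWeight {β : ℝ} (hβ : 0 < β) (a c : ℝ) (k : ℕ) :
    Summable fun n : ℤ => |(n : ℝ) - c| ^ k * igWeight β a n := by
  refine (summable_add_pow_mul_igDecay_sub hβ |(round a : ℝ) - c| k (round a)).of_nonneg_of_le
    (fun n => mul_nonneg (by positivity) (igWeight_pos β a n).le) fun n => ?_
  have hdist : |(n : ℝ) - c| ≤ |((n - round a : ℤ) : ℝ)| + |(round a : ℝ) - c| := by
    push_cast; exact abs_sub_le _ _ _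
  have hw : igWeight β a n ≤ igDecay β (n - round a) :=
    (igWeight_le_igWeight_round_mul_igDecay hβ.le le_rfl a n).trans
      (mul_le_of_le_one_left (igDecay_pos _ _).le (igWeight_le_one hβ.le a _))
  exact mul_le_mul (pow_le_pow_left₀ (abs_nonneg _) hdist k) hw (igWeight_pos β a n).le
    (by positivity)

lemma summable_igWeight {β : ℝ} (hβ : 0 < β) (a : ℝ) : Summable (igWeight β a) := by
  simpa using summable_abs_sub_pow_mul_igWeight hβ a 0 0

lemma igWeight_le_ZIG {β : ℝ} (hβ : 0 < β) (a : ℝ) (n : ℤ) : igWeight β a n ≤ ZIG a β :=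
  (summable_igWeight hβ a).le_tsum n fun j _ => (igWeight_pos β a j).le

lemma ZIG_pos {β : ℝ} (hβ : 0 < β) (a : ℝ) : 0 < ZIG a β :=
  (igWeight_pos β a 0).trans_le (igWeight_le_ZIG hβ a 0)

lemma abs_muIG_sub_mul_ZIG_le {β : ℝ} (hβ : 0 < β) (a c : ℝ) :
    |muIG a β - c| * ZIG a β ≤ ∑' n : ℤ, |(n : ℝ) - c| * igWeight β a n := by
  have hZ := ZIG_pos hβ a
  have hsum := summable_abs_sub_pow_mul_igWeight hβ a c 1
  simp only [pow_one] at hsum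
  have hmean : (muIG a β - c) * ZIG a β = ∑' n : ℤ, ((n : ℝ) - c) * igWeight β a n := by
    have hn : Summable fun n : ℤ => (n : ℝ) * igWeight β a n := by
      refine Summable.of_abs ?_
      simpa [abs_mul, abs_of_pos (igWeight_pos β a _)] using
        summable_abs_sub_pow_mul_igWeight hβ a 0 1
    simp_rw [sub_mul, Summable.tsum_sub hn ((summable_igWeight hβ a).mul_left c), tsum_mul_left]
    rw [muIG, div_mul_cancel₀ _ hZ.ne']
    rfl
  have habs : ∀ n : ℤ, ‖((n : ℝ) - c) * igWeight β a n‖ = |(n : ℝ) - c| * igWeight β a n :=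
    fun n => by rw [Real.norm_eq_abs, abs_mul, abs_of_pos (igWeight_pos β a n)]
  rw [← abs_of_pos hZ, ← abs_mul, hmean, ← Real.norm_eq_abs, ← tsum_congr habs]
  exact norm_tsum_le_tsum_norm (hsum.congr fun n => (habs n).symm)

def igMeanBound (β : ℝ) : ℝ := ∑' t : ℤ, |(t : ℝ)| * igDecay β t

lemma igMeanBound_nonneg (β : ℝ) : 0 ≤ igMeanBound β :=
  tsum_nonneg fun t => mul_nonneg (abs_nonneg _) (igDecay_pos β t).le

lemma abs_muIG_sub_round_le {β βh : ℝ} (hβ : 0 < β) (hβh : β ≤ βh) (a : ℝ) :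
    |muIG a βh - round a| ≤ igMeanBound β := by
  have hβh0 := hβ.trans_le hβh
  have hZ := ZIG_pos hβh0 a
  have hdecay : Summable fun n : ℤ => |((n - round a : ℤ) : ℝ)| * igDecay β (n - round a) := by
    simpa using summable_add_pow_mul_igDecay_sub hβ 0 1 (round a)
  have hshift : ∑' n : ℤ, |((n - round a : ℤ) : ℝ)| * igDecay β (n - round a) = igMeanBound β :=
    (Equiv.subRight (round a)).tsum_eq fun t : ℤ => |(t : ℝ)| * igDecay β t
  refine le_of_mul_le_mul_right ?_ hZ
  calc |muIG a βh - round a| * ZIG a βh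
      ≤ ∑' n : ℤ, |(n : ℝ) - round a| * igWeight βh a n := abs_muIG_sub_mul_ZIG_le hβh0 a _
    _ ≤ ∑' n : ℤ,
          |((n - round a : ℤ) : ℝ)| * igDecay β (n - round a) * igWeight βh a (round a) := by
        have hsum := summable_abs_sub_pow_mul_igWeight hβh0 a (round a) 1
        simp only [pow_one] at hsum
        refine hsum.tsum_le_tsum (fun n => ?_) (hdecay.mul_right _)
        rw [mul_assoc, mul_comm (igDecay β _)]
        push_cast
        exact mul_le_mul_of_nonneg_left
          (igWeight_le_igWeight_round_mul_igDecay hβ.le hβh a n) (abs_nonneg _)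
    _ ≤ igMeanBound β * ZIG a βh := by
        rw [tsum_mul_right, hshift]
        exact mul_le_mul_of_nonneg_left (igWeight_le_ZIG hβh0 a _) (igMeanBound_nonneg β)

lemma half_le_sq_sub_add_sq_sub {r s : ℤ} (hrs : r ≠ s) (m : ℝ) :
    1 / 2 ≤ ((r : ℝ) - m) ^ 2 + ((s : ℝ) - m) ^ 2 := by
  have : (1 : ℝ) ≤ |(r : ℝ) - s| := by exact_mod_cast Int.one_le_abs (sub_ne_zero.2 hrs)
  nlinarith [sq_abs ((r : ℝ) - s), sq_nonneg ((r : ℝ) + s - 2 * m)]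

lemma le_two_mul_tsum_sq_sub_mul {w : ℤ → ℝ} {m : ℝ} (hw : ∀ n, 0 ≤ w n)
    (hsum : Summable fun n : ℤ => ((n : ℝ) - m) ^ 2 * w n) {r s : ℤ} (hrs : r ≠ s)
    (hsr : w s ≤ w r) :
    w s ≤ 2 * ∑' n : ℤ, ((n : ℝ) - m) ^ 2 * w n := by
  have hpair := hsum.sum_le_tsum {r, s} fun n _ => mul_nonneg (sq_nonneg _) (hw n)
  rw [Finset.sum_pair hrs] at hpair
  nlinarith [half_le_sq_sub_add_sq_sub hrs m, hw s,
    mul_le_mul_of_nonneg_left hsr (sq_nonneg ((r : ℝ) - m))]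

lemma tsum_abs_sub_pow_three_mul_le {w g : ℤ → ℝ} {m q W : ℝ} {r : ℤ} (hw : ∀ n, 0 ≤ w n)
    (hg : ∀ t, 0 ≤ g t) (hW : 0 ≤ W) (hg_sum : Summable fun t : ℤ => (|(t : ℝ)| + q) ^ 3 * g t)
    (h2 : Summable fun n : ℤ => ((n : ℝ) - m) ^ 2 * w n)
    (h3 : Summable fun n : ℤ => |(n : ℝ) - m| ^ 3 * w n) (hr : |(r : ℝ) - m| ≤ q)
    (hdecay : ∀ n, n ≠ r → w n ≤ W * g (n - r)) :
    ∑' n : ℤ, |(n : ℝ) - m| ^ 3 * w n ≤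
      q * ∑' n : ℤ, ((n : ℝ) - m) ^ 2 * w n + W * ∑' t : ℤ, (|(t : ℝ)| + q) ^ 3 * g t := by
  have hq : 0 ≤ q := (abs_nonneg _).trans hr
  have hg_shift : Summable fun n : ℤ => (|((n - r : ℤ) : ℝ)| + q) ^ 3 * g (n - r) :=
    (Equiv.subRight r).summable_iff.2 hg_sum
  have hpoint : ∀ n : ℤ, |(n : ℝ) - m| ^ 3 * w n ≤
      q * (((n : ℝ) - m) ^ 2 * w n) + W * ((|((n - r : ℤ) : ℝ)| + q) ^ 3 * g (n - r)) := by
    intro n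
    have hrest : 0 ≤ W * ((|((n - r : ℤ) : ℝ)| + q) ^ 3 * g (n - r)) :=
      mul_nonneg hW (mul_nonneg (by positivity) (hg _))
    rcases eq_or_ne n r with rfl | hn
    · have : |(n : ℝ) - m| ^ 3 ≤ q * ((n : ℝ) - m) ^ 2 := by
        rw [← sq_abs ((n : ℝ) - m), pow_succ' _ 2]
        exact mul_le_mul_of_nonneg_right hr (by positivity)
      nlinarith [hw n]
    · have hdist : |(n : ℝ) - m| ≤ |((n - r : ℤ) : ℝ)| + q := by
        push_cast
        linarith [abs_sub_le (n : ℝ) r m]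
      have := mul_le_mul (pow_le_pow_left₀ (abs_nonneg _) hdist 3) (hdecay n hn) (hw n)
        (by positivity)
      nlinarith [mul_nonneg hq (mul_nonneg (sq_nonneg ((n : ℝ) - m)) (hw n))]
  calc ∑' n : ℤ, |(n : ℝ) - m| ^ 3 * w n
      ≤ ∑' n : ℤ, (q * (((n : ℝ) - m) ^ 2 * w n) +
          W * ((|((n - r : ℤ) : ℝ)| + q) ^ 3 * g (n - r))) :=
        h3.tsum_le_tsum hpoint ((h2.mul_left q).add (hg_shift.mul_left W))
    _ = q * ∑' n : ℤ, ((n : ℝ) - m) ^ 2 * w n + W * ∑' t : ℤ, (|(t : ℝ)| + q) ^ 3 * g t := by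
        rw [(h2.mul_left q).tsum_add (hg_shift.mul_left W), tsum_mul_left, tsum_mul_left]
        congr 2
        exact (Equiv.subRight r).tsum_eq fun t : ℤ => (|(t : ℝ)| + q) ^ 3 * g t

lemma exists_abs_eq_one_mul_sub_round_nonneg (a : ℝ) :
    ∃ σ : ℤ, |σ| = 1 ∧ 0 ≤ σ * (a - round a) := by
  by_cases h : (round a : ℝ) ≤ a
  · exact ⟨1, by simp, by simpa using h⟩
  · exact ⟨-1, by simp, by push_cast; linarith⟩

lemma tsum_abs_sub_muIG_pow_three_mul_le {β βh : ℝ} (hβ : 0 < β) (hβh : β ≤ βh) (a : ℝ) :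
    ∑' n : ℤ, |(n : ℝ) - muIG a βh| ^ 3 * igWeight βh a n ≤
      (igMeanBound β + 2 * ∑' t : ℤ, (|(t : ℝ)| + igMeanBound β) ^ 3 * igDecay β t) *
        ∑' n : ℤ, ((n : ℝ) - muIG a βh) ^ 2 * igWeight βh a n := by
  have hβh0 := hβ.trans_le hβh
  obtain ⟨σ, hσ, hσa⟩ := exists_abs_eq_one_mul_sub_round_nonneg a
  have hrs : round a ≠ round a + σ := by
    have : σ ≠ 0 := by rintro rfl; simp at hσ
    omega
  have h2 : Summable fun n : ℤ => ((n : ℝ) - muIG a βh) ^ 2 * igWeight βh a n := by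
    simpa only [sq_abs] using summable_abs_sub_pow_mul_igWeight hβh0 a (muIG a βh) 2
  have hW := le_two_mul_tsum_sq_sub_mul (fun n => (igWeight_pos βh a n).le) h2 hrs
    (igWeight_le_igWeight_round hβh0.le a _)
  have hC : 0 ≤ ∑' t : ℤ, (|(t : ℝ)| + igMeanBound β) ^ 3 * igDecay β t :=
    tsum_nonneg fun t => mul_nonneg (by have := igMeanBound_nonneg β; positivity)
      (igDecay_pos β t).le
  have key := tsum_abs_sub_pow_three_mul_le (q := igMeanBound β) (fun n => (igWeight_pos βh a n).le)
    (fun t => (igDecay_pos β t).le) (igWeight_pos βh a (round a + σ)).le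
    (summable_add_pow_mul_igDecay hβ _ 3) h2 (summable_abs_sub_pow_mul_igWeight hβh0 a _ 3)
    (by rw [abs_sub_comm]; exact abs_muIG_sub_round_le hβ hβh a)
    (fun n hn => igWeight_le_igWeight_add_mul_igDecay hβ.le hβh hσ hσa hn)
  nlinarith [mul_le_mul_of_nonneg_right hW hC]

/-- Lemma 2.4: for every `β > 0` there is a finite constant `K` such that
`T^{IG}(a, β̂) ≤ K · Var^{IG}(a, β̂)` for all `β̂ ≥ β` and all `a ∈ ℝ`. -/
theorem TIG_le_const_mul_varIG (β : ℝ) (hβ : 0 < β) :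
    ∃ K : ℝ, ∀ βhat : ℝ, β ≤ βhat → ∀ a : ℝ, TIG a βhat ≤ K * VarIG a βhat := by
  refine ⟨igMeanBound β + 2 * ∑' t : ℤ, (|(t : ℝ)| + igMeanBound β) ^ 3 * igDecay β t,
    fun βhat hβhat a => ?_⟩
  rw [TIG, VarIG, ← mul_div_assoc]
  exact div_le_div_of_nonneg_right (tsum_abs_sub_muIG_pow_three_mul_le hβ hβhat a)
    (ZIG_pos (hβ.trans_le hβhat) a).le
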